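/- The floating function operation commutes with affine maps: for any nonsingular affine map A and any convex ψ with f = e^{−ψ} ∈ LC and δ ≥ 0, one has A(ψ_δ) = (Aψ)_δ and A(f_δ) = (Af)_δ, where (Aψ)(x) = ψ(Ax). -/

import Mathlib

open MeasureTheory Filter
noncomputable section

/-- `ℝⁿ` as a Euclidean space. -/
abbrev Euc (n : ℕ) := EuclideanSpace ℝ (Fin n)

/-- `f` is a non-degenerate, upper semicontinuous, integrable log-concave
function on `ℝⁿ` (the class `LC`): `f ≥ 0`, `f` is upper semicontinuous,
log-concave, integrable with `0 < ∫ f`, and the interior of its support is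
non-empty. -/
def IsLC {n : ℕ} (f : Euc n → ℝ) : Prop :=
  (∀ x, 0 ≤ f x) ∧ UpperSemicontinuous f ∧
  (∀ x y : Euc n, ∀ a b : ℝ, 0 ≤ a → 0 ≤ b → a + b = 1 →
      f x ^ a * f y ^ b ≤ f (a • x + b • y)) ∧
  Integrable f ∧ 0 < ∫ x, f x ∧ (interior (Function.support f)).Nonempty

/-- Convexity for an `EReal`-valued function (`ψ : ℝⁿ → ℝ ∪ {∞}`). -/
def ConvexEReal {n : ℕ} (ψ : Euc n → EReal) : Prop :=
  ∀ x y : Euc n, ∀ a b : ℝ, 0 ≤ a → 0 ≤ b → a + b = 1 →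
    ψ (a • x + b • y) ≤ (a : EReal) * ψ x + (b : EReal) * ψ y

/-- `e^{−t}` for `t ∈ ℝ ∪ {±∞}`, with `e^{−∞} = 0`. -/
def expNeg (t : EReal) : ℝ := if t = ⊤ then 0 else Real.exp (-(t.toReal))

/-- The epigraph of `ψ : ℝⁿ → ℝ ∪ {∞}` as a subset of `ℝⁿ × ℝ`. -/
def epiE {n : ℕ} (ψ : Euc n → EReal) : Set (Euc n × ℝ) :=
  {p | ψ p.1 ≤ (p.2 : EReal)}

/-- The floating set of the epigraph of `ψ` at parameter `δ`:
`(epi ψ)_δ = ⋂ {H⁺ : vol_{n+1}(H⁻ ∩ epi ψ) ≤ δ ∫ e^{−ψ}}`, the intersection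
over all half-spaces `H⁺ = {p : φ p ≥ β}` of `ℝⁿ × ℝ`. -/
def floatEpi {n : ℕ} (ψ : Euc n → EReal) (δ : ℝ) : Set (Euc n × ℝ) :=
  ⋂ (φ : (Euc n × ℝ) →ₗ[ℝ] ℝ) (β : ℝ)
    (_ : volume (epiE ψ ∩ {p | φ p ≤ β})
        ≤ ENNReal.ofReal (δ * ∫ x, expNeg (ψ x))),
    {p | β ≤ φ p}

/-- The floating function `ψ_δ`, defined by `epi(ψ_δ) = (epi ψ)_δ`; its value
at `x` is the infimum of the heights `s` with `(x,s)` in the floating set. -/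
def floatPsi {n : ℕ} (ψ : Euc n → EReal) (δ : ℝ) (x : Euc n) : EReal :=
  ⨅ (s : ℝ) (_ : (x, s) ∈ floatEpi ψ δ), (s : EReal)

/-! The map `B (x, s) = (A x, s)` of `ℝⁿ × ℝ` satisfies `epi (ψ ∘ A) = B⁻¹ (epi ψ)`, pulls
half-spaces back to half-spaces (bijectively, `B` being invertible), and scales `(n+1)`-volumes by
`|det A|⁻¹`, the same factor by which the change of variables scales `∫ e^{-ψ}`. Hence the
half-spaces cutting off at most `δ ∫ e^{-ψ∘A}` from `epi (ψ ∘ A)` are the `B`-preimages of those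
cutting off at most `δ ∫ e^{-ψ}` from `epi ψ`, so `(epi (ψ ∘ A))_δ = B⁻¹ ((epi ψ)_δ)`. -/

open scoped ENNReal

section AffineChangeOfVariables

variable {E : Type*} [NormedAddCommGroup E] [NormedSpace ℝ E] [MeasurableSpace E] [BorelSpace E]
  [FiniteDimensional ℝ E] (μ : Measure E) [μ.IsAddHaarMeasure]

theorem AffineEquiv.measurableEmbedding (f : E ≃ᵃ[ℝ] E) : MeasurableEmbedding f :=
  (f.toContinuousAffineEquiv.toHomeomorph).measurableEmbedding

theorem MeasureTheory.Measure.map_affineEquiv_addHaar (f : E ≃ᵃ[ℝ] E) :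
    μ.map f = ENNReal.ofReal |(LinearMap.det (f.linear : E →ₗ[ℝ] E))⁻¹| • μ := by
  have hdet : LinearMap.det (f.linear : E →ₗ[ℝ] E) ≠ 0 := (LinearEquiv.isUnit_det' _).ne_zero
  have hf : ⇑f = (· + f 0) ∘ ⇑(f.linear : E →ₗ[ℝ] E) := (f : E →ᵃ[ℝ] E).decomp
  rw [hf, ← Measure.map_map (measurable_add_const _)
      (f.linear : E →ₗ[ℝ] E).continuous_of_finiteDimensional.measurable,
    Measure.map_linearMap_addHaar_eq_smul_addHaar μ hdet, Measure.map_smul,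
    map_add_right_eq_self]

theorem MeasureTheory.Measure.addHaar_preimage_affineEquiv (f : E ≃ᵃ[ℝ] E) (s : Set E) :
    μ (f ⁻¹' s) = ENNReal.ofReal |(LinearMap.det (f.linear : E →ₗ[ℝ] E))⁻¹| * μ s := by
  rw [← f.measurableEmbedding.map_apply, μ.map_affineEquiv_addHaar f]
  rfl

theorem MeasureTheory.Measure.integral_comp_affineEquiv {G : Type*} [NormedAddCommGroup G]
    [NormedSpace ℝ G] (f : E ≃ᵃ[ℝ] E) (g : E → G) :
    ∫ x, g (f x) ∂μ = |(LinearMap.det (f.linear : E →ₗ[ℝ] E))⁻¹| • ∫ x, g x ∂μ := by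
  rw [← f.measurableEmbedding.integral_map, μ.map_affineEquiv_addHaar f,
    integral_smul_measure, ENNReal.toReal_ofReal (abs_nonneg _)]

end AffineChangeOfVariables

section FloatingSet

variable {V W : Type*} [AddCommGroup V] [Module ℝ V] [AddCommGroup W] [Module ℝ W]

theorem LinearMap.map_affineMap_apply (φ : W →ₗ[ℝ] ℝ) (B : V →ᵃ[ℝ] W) (q : V) :
    φ (B q) = (φ ∘ₗ B.linear) q + φ (B 0) := by
  rw [congrFun B.decomp q, Pi.add_apply, map_add, LinearMap.comp_apply]

variable [MeasurableSpace V] [MeasurableSpace W]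

def floatingSet (μ : Measure V) (C : Set V) (K : ℝ≥0∞) : Set V :=
  ⋂ (φ : V →ₗ[ℝ] ℝ) (β : ℝ) (_ : μ (C ∩ {p | φ p ≤ β}) ≤ K), {p | β ≤ φ p}

theorem floatingSet_preimage_subset {μ : Measure V} {ν : Measure W} {c : ℝ≥0∞}
    (B : V →ᵃ[ℝ] W) (hB : ∀ T, μ (B ⁻¹' T) ≤ c * ν T) (C : Set W) (K : ℝ≥0∞) :
    floatingSet μ (B ⁻¹' C) (c * K) ⊆ B ⁻¹' floatingSet ν C K := by
  intro p hp
  simp only [floatingSet, Set.mem_iInter, Set.mem_preimage, Set.mem_ofPred_eq] at hp ⊢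
  intro φ β hφβ
  have hhalf : B ⁻¹' {q | φ q ≤ β} = {q | (φ ∘ₗ B.linear) q ≤ β - φ (B 0)} := by
    ext q
    simp only [Set.mem_preimage, Set.mem_ofPred_eq, φ.map_affineMap_apply B q, le_sub_iff_add_le]
  have hvol : μ (B ⁻¹' C ∩ {q | (φ ∘ₗ B.linear) q ≤ β - φ (B 0)}) ≤ c * K := by
    rw [← hhalf, ← Set.preimage_inter]
    exact (hB _).trans (mul_le_mul_right hφβ c)
  have := hp _ _ hvol
  rw [φ.map_affineMap_apply B p]
  linarith

theorem floatingSet_preimage {μ : Measure V} {ν : Measure W} {c : ℝ≥0∞} (hc₀ : c ≠ 0)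
    (hc : c ≠ ∞) (B : V ≃ᵃ[ℝ] W) (hB : ∀ T, μ (B ⁻¹' T) = c * ν T) (C : Set W) (K : ℝ≥0∞) :
    floatingSet μ (B ⁻¹' C) (c * K) = B ⁻¹' floatingSet ν C K := by
  refine (floatingSet_preimage_subset (B : V →ᵃ[ℝ] W) (fun T => (hB T).le) C K).antisymm ?_
  have hBsymm : ∀ T, ν (B.symm ⁻¹' T) ≤ c⁻¹ * μ T := fun T => by
    rw [← ENNReal.inv_mul_cancel_left hc₀ hc (b := ν _), ← hB]
    simp only [← Set.preimage_comp, Function.comp_def, B.symm_apply_apply, Set.preimage_id',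
      le_refl]
  have hsymm := floatingSet_preimage_subset (B.symm : W →ᵃ[ℝ] V) hBsymm (B ⁻¹' C) (c * K)
  simp only [ENNReal.inv_mul_cancel_left hc₀ hc, AffineEquiv.coe_coe, ← Set.preimage_comp,
    Function.comp_def, B.apply_symm_apply, Set.preimage_id'] at hsymm
  intro p hp
  simpa only [AffineEquiv.coe_coe, Set.mem_preimage, B.symm_apply_apply] using hsymm hp

end FloatingSet

theorem MeasureTheory.Measure.prod_preimage_prodCongr_refl {E F : Type*}
    [NormedAddCommGroup E] [NormedSpace ℝ E] [MeasurableSpace E] [BorelSpace E]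
    [FiniteDimensional ℝ E] [NormedAddCommGroup F] [NormedSpace ℝ F] [MeasurableSpace F]
    [BorelSpace F] [FiniteDimensional ℝ F] (μ : Measure E) [μ.IsAddHaarMeasure] (ν : Measure F)
    [ν.IsAddHaarMeasure] (A : E ≃ᵃ[ℝ] E) (T : Set (E × F)) :
    μ.prod ν (A.prodCongr (AffineEquiv.refl ℝ F) ⁻¹' T)
      = ENNReal.ofReal |(LinearMap.det (A.linear : E →ₗ[ℝ] E))⁻¹| * μ.prod ν T := by
  have hlinear : (A.prodCongr (AffineEquiv.refl ℝ F)).linear.toLinearMap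
      = (A.linear : E →ₗ[ℝ] E).prodMap LinearMap.id := rfl
  rw [(μ.prod ν).addHaar_preimage_affineEquiv, hlinear, LinearMap.det_prodMap, LinearMap.det_id,
    mul_one]

theorem floatEpi_comp_affineEquiv {n : ℕ} (ψ : Euc n → EReal) (δ : ℝ) (A : Euc n ≃ᵃ[ℝ] Euc n) :
    floatEpi (fun y => ψ (A y)) δ = A.prodCongr (AffineEquiv.refl ℝ ℝ) ⁻¹' floatEpi ψ δ := by
  set c := ENNReal.ofReal |(LinearMap.det (A.linear : Euc n →ₗ[ℝ] Euc n))⁻¹|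
  have hc₀ : c ≠ 0 :=
    (ENNReal.ofReal_pos.2 (abs_pos.2 (inv_ne_zero (LinearEquiv.isUnit_det' A.linear).ne_zero))).ne'
  have hmass : ENNReal.ofReal (δ * ∫ x, expNeg (ψ (A x)))
      = c * ENNReal.ofReal (δ * ∫ x, expNeg (ψ x)) := by
    rw [volume.integral_comp_affineEquiv A (fun x => expNeg (ψ x)), smul_eq_mul, mul_left_comm,
      ENNReal.ofReal_mul (abs_nonneg _)]
  -- both `floatEpi = floatingSet volume ∘ epiE` and `epiE (ψ ∘ A) = B ⁻¹' epiE ψ` hold by `rfl`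
  show floatingSet volume (A.prodCongr (AffineEquiv.refl ℝ ℝ) ⁻¹' epiE ψ) _ = _
  rw [hmass]
  exact floatingSet_preimage hc₀ ENNReal.ofReal_ne_top _
    (volume.prod_preimage_prodCongr_refl volume A) _ _

theorem floatPsi_comp_affineEquiv {n : ℕ} (ψ : Euc n → EReal) (δ : ℝ) (A : Euc n ≃ᵃ[ℝ] Euc n)
    (x : Euc n) : floatPsi ψ δ (A x) = floatPsi (fun y => ψ (A y)) δ x := by
  simp only [floatPsi, floatEpi_comp_affineEquiv]
  rfl

theorem floating_function_affine_covariant (n : ℕ) (ψ : Euc n → EReal)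
    (δ : ℝ) (A : Euc n ≃ᵃ[ℝ] Euc n) :
    (∀ x, floatPsi ψ δ (A x) = floatPsi (fun y => ψ (A y)) δ x) ∧
      (∀ x, expNeg (floatPsi ψ δ (A x))
        = expNeg (floatPsi (fun y => ψ (A y)) δ x)) :=
  ⟨floatPsi_comp_affineEquiv ψ δ A, fun x => by rw [floatPsi_comp_affineEquiv]⟩
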